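/- arXiv:1811.09525 — 7 statements merged into one kernel-verified Lean document; each statement's English description precedes it below -/
import Mathlib

section
/- For every real P > 0 and every integer J ≥ 2, there exists a unique real number β with 1 ≤ β ≤ J satisfying (1 + P·J·β)^(J−1) = (1 + P·β·(J−β))^J. -/
/-- For every real `P > 0` and every integer `J ≥ 2`, there exists a unique real `β`
with `1 ≤ β ≤ J` satisfying `(1 + P·J·β)^(J−1) = (1 + P·β·(J−β))^J`. -/
theorem stmt_0 (P : ℝ) (hP : 0 < P) (J : ℕ) (hJ : 2 ≤ J) :
    ∃! β : ℝ, 1 ≤ β ∧ β ≤ (J : ℝ) ∧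
      (1 + P * (J : ℝ) * β) ^ (J - 1) = (1 + P * β * ((J : ℝ) - β)) ^ J := by
  have hJ1 : (1:ℝ) < (J:ℝ) := by exact_mod_cast lt_of_lt_of_le one_lt_two hJ
  have hJ0 : (0:ℝ) < (J:ℝ) := lt_trans one_pos hJ1
  set f : ℝ → ℝ := fun x => ((J:ℝ) - 1) * Real.log (1 + P * (J:ℝ) * x)
      - (J:ℝ) * Real.log (1 + P * x * ((J:ℝ) - x)) with hf
  have hcast : ((J - 1 : ℕ) : ℝ) = (J:ℝ) - 1 := by
    have : (1:ℕ) ≤ J := by omega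
    push_cast [Nat.cast_sub this]
    ring
  -- positivity of the two bases on [1, J]
  have hApos : ∀ x : ℝ, 1 ≤ x → 0 < 1 + P * (J:ℝ) * x := by
    intro x hx
    nlinarith [mul_pos (mul_pos hP hJ0) (lt_of_lt_of_le zero_lt_one hx)]
  have hBpos : ∀ x : ℝ, 1 ≤ x → x ≤ (J:ℝ) → 0 < 1 + P * x * ((J:ℝ) - x) := by
    intro x hx1 hx2
    nlinarith [mul_nonneg (mul_nonneg hP.le (by linarith : (0:ℝ) ≤ x))
      (by linarith : (0:ℝ) ≤ (J:ℝ) - x)]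
  -- the equation is equivalent to f x = 0
  have key : ∀ x : ℝ, 1 ≤ x → x ≤ (J:ℝ) →
      ((1 + P * (J:ℝ) * x) ^ (J - 1) = (1 + P * x * ((J:ℝ) - x)) ^ J ↔ f x = 0) := by
    intro x h1 h2
    have hA := hApos x h1
    have hB := hBpos x h1 h2
    constructor
    · intro h
      have h' := congrArg Real.log h
      rw [Real.log_pow, Real.log_pow, hcast] at h'
      simp only [hf]
      linarith
    · intro h
      have h' : Real.log ((1 + P * (J:ℝ) * x) ^ (J - 1))
          = Real.log ((1 + P * x * ((J:ℝ) - x)) ^ J) := by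
        rw [Real.log_pow, Real.log_pow, hcast]
        simp only [hf] at h
        linarith
      exact Real.log_injOn_pos (Set.mem_Ioi.2 (pow_pos hA _))
        (Set.mem_Ioi.2 (pow_pos hB _)) h'
  -- continuity
  have hcont : ContinuousOn f (Set.Icc 1 (J:ℝ)) := by
    apply ContinuousOn.sub
    · apply continuousOn_const.mul
      apply ContinuousOn.log
      · fun_prop
      · intro x hx; exact ne_of_gt (hApos x hx.1)
    · apply continuousOn_const.mul
      apply ContinuousOn.log
      · fun_prop
      · intro x hx; exact ne_of_gt (hBpos x hx.1 hx.2)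
  -- derivative
  have hderiv : ∀ x ∈ Set.Ioo (1:ℝ) (J:ℝ), HasDerivAt f
      (((J:ℝ) - 1) * ((P * (J:ℝ)) / (1 + P * (J:ℝ) * x))
        - (J:ℝ) * ((P * ((J:ℝ) - x) + P * x * (-1)) / (1 + P * x * ((J:ℝ) - x)))) x := by
    intro x hx
    have hA := hApos x hx.1.le
    have hB := hBpos x hx.1.le hx.2.le
    have hu : HasDerivAt (fun y : ℝ => 1 + P * (J:ℝ) * y) (P * (J:ℝ)) x := by
      simpa using ((hasDerivAt_id x).const_mul (P * (J:ℝ))).const_add 1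
    have hv : HasDerivAt (fun y : ℝ => 1 + P * y * ((J:ℝ) - y))
        (P * ((J:ℝ) - x) + P * x * (-1)) x := by
      have h1 : HasDerivAt (fun y : ℝ => P * y) P x := by
        simpa using (hasDerivAt_id x).const_mul P
      have h2 : HasDerivAt (fun y : ℝ => (J:ℝ) - y) (-1) x := by
        simpa using (hasDerivAt_id' x).const_sub (J:ℝ)
      have := (h1.mul h2).const_add 1
      simpa using this
    exact ((hu.log hA.ne').const_mul ((J:ℝ) - 1)).sub ((hv.log hB.ne').const_mul (J:ℝ))
  -- strict monotonicity
  have hmono : StrictMonoOn f (Set.Icc 1 (J:ℝ)) := by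
    apply strictMonoOn_of_deriv_pos (convex_Icc _ _) hcont
    intro x hx
    rw [interior_Icc] at hx
    rw [(hderiv x hx).deriv]
    have hA := hApos x hx.1.le
    have hB := hBpos x hx.1.le hx.2.le
    have hx1 : 1 < x := hx.1
    have key2 : ((J:ℝ) - 2 * x) * (1 + P * (J:ℝ) * x)
        < ((J:ℝ) - 1) * (1 + P * x * ((J:ℝ) - x)) := by
      nlinarith [mul_pos hP (mul_pos (lt_trans one_pos hx1)
        (by nlinarith : (0:ℝ) < x * ((J:ℝ) + 1) - (J:ℝ)))]
    rw [sub_pos, mul_div_assoc', mul_div_assoc', div_lt_div_iff₀ hB hA]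
    have hPJ : (0:ℝ) < P * (J:ℝ) := mul_pos hP hJ0
    nlinarith [mul_lt_mul_of_pos_left key2 hPJ]
  -- f 1 ≤ 0 via AM-GM
  have hf1 : f 1 ≤ 0 := by
    have hA := hApos 1 le_rfl
    have harg : ((J:ℝ) - 1) / (J:ℝ) * (1 + P * (J:ℝ) * 1) + 1 / (J:ℝ) * 1
        = 1 + P * 1 * ((J:ℝ) - 1) := by
      field_simp
      ring
    have hw1 : (0:ℝ) ≤ ((J:ℝ) - 1) / (J:ℝ) := div_nonneg (by linarith) hJ0.le
    have hw2 : (0:ℝ) ≤ 1 / (J:ℝ) := by positivity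
    have hsum : ((J:ℝ) - 1) / (J:ℝ) + 1 / (J:ℝ) = 1 := by field_simp; ring
    have hb := Real.geom_mean_le_arith_mean2_weighted hw1 hw2 hA.le zero_le_one hsum
    rw [Real.one_rpow, mul_one, harg] at hb
    have hB := hBpos 1 le_rfl hJ1.le
    have hlog := Real.log_le_log (Real.rpow_pos_of_pos hA _) hb
    rw [Real.log_rpow hA] at hlog
    have := mul_le_mul_of_nonneg_left hlog hJ0.le
    have heq : (J:ℝ) * (((J:ℝ) - 1) / (J:ℝ) * Real.log (1 + P * (J:ℝ) * 1))
        = ((J:ℝ) - 1) * Real.log (1 + P * (J:ℝ) * 1) := by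
      field_simp
    rw [heq] at this
    simp only [hf]
    linarith
  -- f J ≥ 0
  have hfJ : 0 ≤ f (J:ℝ) := by
    simp only [hf, sub_self, mul_zero, add_zero, Real.log_one]
    have : 0 ≤ Real.log (1 + P * (J:ℝ) * (J:ℝ)) := by
      apply Real.log_nonneg
      nlinarith [mul_pos (mul_pos hP hJ0) hJ0]
    nlinarith [mul_nonneg (by linarith : (0:ℝ) ≤ (J:ℝ) - 1) this]
  -- existence via IVT
  obtain ⟨β, hβmem, hβeq⟩ := intermediate_value_Icc hJ1.le hcont ⟨hf1, hfJ⟩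
  refine ⟨β, ⟨hβmem.1, hβmem.2, (key β hβmem.1 hβmem.2).mpr hβeq⟩, ?_⟩
  rintro y ⟨hy1, hy2, hyeq⟩
  exact hmono.injOn ⟨hy1, hy2⟩ hβmem (((key y hy1 hy2).mp hyeq).trans hβeq.symm)
end

section
/- For every real P > 0 and every integer J ≥ 3, the function β ↦ ℓ(β) = (1/2)·log(1 + J·P·β) − (J/(2(J−1)))·log(1 + P·β·(J−β)) is strictly convex on the interval [1, J]. -/
/-- The function `ℓ(β) = (1/2)·log(1 + J·P·β) − (J/(2(J−1)))·log(1 + P·β·(J−β))`. -/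
noncomputable def ell (J : ℕ) (P : ℝ) (β : ℝ) : ℝ :=
  (1 / 2) * Real.log (1 + (J : ℝ) * P * β)
    - ((J : ℝ) / (2 * ((J : ℝ) - 1))) * Real.log (1 + P * β * ((J : ℝ) - β))

noncomputable def ellD (J : ℕ) (P x : ℝ) : ℝ :=
  (1 / 2) * ((J : ℝ) * P / (1 + (J : ℝ) * P * x))
    - ((J : ℝ) / (2 * ((J : ℝ) - 1))) *
      ((P * ((J : ℝ) - x) + P * x * (-1)) / (1 + P * x * ((J : ℝ) - x)))

noncomputable def ellD2 (J : ℕ) (P x : ℝ) : ℝ :=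
  (1 / 2) * ((0 * (1 + (J : ℝ) * P * x) - (J : ℝ) * P * ((J : ℝ) * P)) / (1 + (J : ℝ) * P * x) ^ 2)
    - ((J : ℝ) / (2 * ((J : ℝ) - 1))) *
      (((P * (-1) + P * (-1)) * (1 + P * x * ((J : ℝ) - x))
          - (P * ((J : ℝ) - x) + P * x * (-1)) * (P * ((J : ℝ) - x) + P * x * (-1)))
        / (1 + P * x * ((J : ℝ) - x)) ^ 2)

lemma hasDerivAt_u (J : ℕ) (P x : ℝ) :
    HasDerivAt (fun β : ℝ => 1 + (J : ℝ) * P * β) ((J : ℝ) * P) x := by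
  simpa using ((hasDerivAt_id x).const_mul ((J : ℝ) * P)).const_add 1

lemma hasDerivAt_v (J : ℕ) (P x : ℝ) :
    HasDerivAt (fun β : ℝ => 1 + P * β * ((J : ℝ) - β))
      (P * ((J : ℝ) - x) + P * x * (-1)) x := by
  have h1 : HasDerivAt (fun β : ℝ => P * β) P x := by
    simpa using (hasDerivAt_id x).const_mul P
  have h2 : HasDerivAt (fun β : ℝ => (J : ℝ) - β) (-1) x := by
    simpa using ((hasDerivAt_id x).const_sub (J : ℝ))
  simpa using (h1.mul h2).const_add 1

lemma hasDerivAt_ell (J : ℕ) (P x : ℝ) (hu : 1 + (J : ℝ) * P * x ≠ 0)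
    (hv : 1 + P * x * ((J : ℝ) - x) ≠ 0) :
    HasDerivAt (ell J P) (ellD J P x) x := by
  have hlu : HasDerivAt (fun β : ℝ => Real.log (1 + (J : ℝ) * P * β))
      ((J : ℝ) * P / (1 + (J : ℝ) * P * x)) x := (hasDerivAt_u J P x).log hu
  have hlv : HasDerivAt (fun β : ℝ => Real.log (1 + P * β * ((J : ℝ) - β)))
      ((P * ((J : ℝ) - x) + P * x * (-1)) / (1 + P * x * ((J : ℝ) - x))) x :=
    (hasDerivAt_v J P x).log hv
  exact (hlu.const_mul (1 / 2)).sub (hlv.const_mul ((J : ℝ) / (2 * ((J : ℝ) - 1))))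

lemma hasDerivAt_ellD (J : ℕ) (P x : ℝ) (hu : 1 + (J : ℝ) * P * x ≠ 0)
    (hv : 1 + P * x * ((J : ℝ) - x) ≠ 0) :
    HasDerivAt (ellD J P) (ellD2 J P x) x := by
  have hq1 : HasDerivAt (fun β : ℝ => (J : ℝ) * P / (1 + (J : ℝ) * P * β))
      ((0 * (1 + (J : ℝ) * P * x) - (J : ℝ) * P * ((J : ℝ) * P)) / (1 + (J : ℝ) * P * x) ^ 2)
      x := (hasDerivAt_const x ((J : ℝ) * P)).div (hasDerivAt_u J P x) hu
  have hna : HasDerivAt (fun β : ℝ => P * ((J : ℝ) - β)) (P * (-1)) x := by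
    simpa using ((hasDerivAt_const x (J : ℝ)).sub (hasDerivAt_id x)).const_mul P
  have hnb : HasDerivAt (fun β : ℝ => P * β * (-1)) (P * (-1)) x := by
    have h1 : HasDerivAt (fun β : ℝ => P * β) P x := by
      simpa using (hasDerivAt_id x).const_mul P
    simpa using h1.mul_const (-1)
  have hq2 : HasDerivAt
      (fun β : ℝ => (P * ((J : ℝ) - β) + P * β * (-1)) / (1 + P * β * ((J : ℝ) - β)))
      (((P * (-1) + P * (-1)) * (1 + P * x * ((J : ℝ) - x))
          - (P * ((J : ℝ) - x) + P * x * (-1)) * (P * ((J : ℝ) - x) + P * x * (-1)))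
        / (1 + P * x * ((J : ℝ) - x)) ^ 2) x :=
    (hna.add hnb).div (hasDerivAt_v J P x) hv
  exact (hq1.const_mul (1 / 2)).sub (hq2.const_mul ((J : ℝ) / (2 * ((J : ℝ) - 1))))

/-- For every real `P > 0` and every integer `J ≥ 3`, the function `ℓ` is strictly
convex on `[1, J]`. -/
theorem stmt_1 (P : ℝ) (hP : 0 < P) (J : ℕ) (hJ : 3 ≤ J) :
    StrictConvexOn ℝ (Set.Icc (1 : ℝ) (J : ℝ)) (ell J P) := by
  have hj : (3 : ℝ) ≤ (J : ℝ) := by exact_mod_cast hJ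
  set j : ℝ := (J : ℝ) with hjdef
  -- the open set where everything is smooth
  set U : Set ℝ := Set.Ioi (0 : ℝ) ∩ {x : ℝ | 0 < 1 + P * x * (j - x)} with hUdef
  have hUopen : IsOpen U := by
    apply isOpen_Ioi.inter
    have : Continuous fun x : ℝ => 1 + P * x * (j - x) := by continuity
    exact isOpen_lt continuous_const this
  have hUmem : ∀ x : ℝ, 0 < x → 0 < 1 + P * x * (j - x) → x ∈ U := by
    intro x h1 h2; exact ⟨h1, h2⟩
  have hposu : ∀ x : ℝ, x ∈ U → 0 < 1 + j * P * x := by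
    intro x hx
    have hx0 : 0 < x := hx.1
    have : 0 < j := by linarith
    have : 0 < j * P * x := by positivity
    linarith
  have hsub : Set.Icc (1 : ℝ) j ⊆ U := by
    intro x hx
    rcases hx with ⟨hx1, hx2⟩
    refine ⟨by simp; linarith, ?_⟩
    have h0 : 0 < x := by linarith
    have : 0 ≤ P * x * (j - x) := by
      have : 0 ≤ j - x := by linarith
      positivity
    simpa using by linarith
  have hkey : ∀ x ∈ U, HasDerivAt (ell J P) (ellD J P x) x := fun x hx =>
    hasDerivAt_ell J P x (ne_of_gt (hposu x hx)) (ne_of_gt hx.2)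
  have hkey2 : ∀ x ∈ U, HasDerivAt (ellD J P) (ellD2 J P x) x := fun x hx =>
    hasDerivAt_ellD J P x (ne_of_gt (hposu x hx)) (ne_of_gt hx.2)
  apply strictConvexOn_of_deriv2_pos (convex_Icc 1 j)
  · intro x hx
    exact ((hkey x (hsub hx)).continuousAt).continuousWithinAt
  · intro x hx
    rw [interior_Icc] at hx
    have hxU : x ∈ U := hsub ⟨le_of_lt hx.1, le_of_lt hx.2⟩
    have hderiv_eq : deriv (ell J P) =ᶠ[nhds x] ellD J P :=
      Filter.eventuallyEq_of_mem (hUopen.mem_nhds hxU) fun y hy => (hkey y hy).deriv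
    have h2 : deriv^[2] (ell J P) x = ellD2 J P x := by
      have : deriv (deriv (ell J P)) x = deriv (ellD J P) x := hderiv_eq.deriv_eq
      simp only [Function.iterate_succ, Function.iterate_zero, Function.comp_apply, id]
      rw [this, (hkey2 x hxU).deriv]
    rw [h2]
    -- positivity of the second derivative
    have hA : 0 < 1 + j * P * x := hposu x hxU
    have hB : 0 < 1 + P * x * (j - x) := hxU.2
    have hj1 : (0 : ℝ) < j - 1 := by linarith
    have hj0 : (0 : ℝ) < j := by linarith
    have hx1 : (1 : ℝ) < x := hx.1
    have hx2 : x < j := hx.2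
    have hkeyineq : 0 < (1 + j * P * x) ^ 2 * (2 * (1 + P * x * (j - x)) + P * (j - 2 * x) ^ 2)
        - j * (j - 1) * P * (1 + P * x * (j - x)) ^ 2 := by
      have hid : (1 + j * P * x) ^ 2 * (2 * (1 + P * x * (j - x)) + P * (j - 2 * x) ^ 2)
          - j * (j - 1) * P * (1 + P * x * (j - x)) ^ 2
          = 2 + P * (2 * x ^ 2 + 2 * j * x + j)
            + P ^ 2 * (2 * j * x * (2 * x ^ 2 - x + j))
            + P ^ 3 * (j * x ^ 2 * (x ^ 2 + j * (x ^ 2 - 2 * x + j))) := by ring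
      have h1 : 0 < P * (2 * x ^ 2 + 2 * j * x + j) := by
        have : 0 < 2 * x ^ 2 + 2 * j * x + j := by nlinarith
        positivity
      have h2 : 0 < P ^ 2 * (2 * j * x * (2 * x ^ 2 - x + j)) := by
        have : 0 < 2 * x ^ 2 - x + j := by nlinarith
        have : 0 < 2 * j * x * (2 * x ^ 2 - x + j) := by positivity
        positivity
      have h3 : 0 < P ^ 3 * (j * x ^ 2 * (x ^ 2 + j * (x ^ 2 - 2 * x + j))) := by
        have h4 : 0 < x ^ 2 - 2 * x + j := by nlinarith
        have : 0 < x ^ 2 + j * (x ^ 2 - 2 * x + j) := by nlinarith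
        have : 0 < j * x ^ 2 * (x ^ 2 + j * (x ^ 2 - 2 * x + j)) := by positivity
        positivity
      rw [hid]; linarith
    have he : ellD2 J P x
        = j * P * ((1 + j * P * x) ^ 2 * (2 * (1 + P * x * (j - x)) + P * (j - 2 * x) ^ 2)
            - j * (j - 1) * P * (1 + P * x * (j - x)) ^ 2)
          / (2 * (j - 1) * (1 + j * P * x) ^ 2 * (1 + P * x * (j - x)) ^ 2) := by
      unfold ellD2
      rw [← hjdef]
      field_simp
      ring
    rw [he]
    apply div_pos
    · exact mul_pos (by positivity) hkeyineq
    · positivity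
end

section
/- For every real P > 0 and every integer J ≥ 2, one has the strict inequality (1 + J·P)^(J−1) < (1 + (J−1)·P)^J; equivalently, ℓ(1) < 0, where ℓ(β) = (1/2)·log(1 + J·P·β) − (J/(2(J−1)))·log(1 + P·β·(J−β)). -/
open Real

theorem mul_log_one_add_mul_lt_mul_log_one_add_mul {P s t : ℝ} (hP : 0 < P) (hs : 0 < s)
    (hst : s < t) : s * log (1 + t * P) < t * log (1 + s * P) := by
  have ht : 0 < t := hs.trans hst
  have hconcave := strictConcaveOn_log_Ioi.2 (Set.mem_Ioi.2 one_pos)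
    (Set.mem_Ioi.2 (by positivity : 0 < 1 + t * P)) (by nlinarith : (1 : ℝ) ≠ 1 + t * P)
    (div_pos (sub_pos.2 hst) ht) (div_pos hs ht) (by field_simp; ring)
  have hcomb : (t - s) / t * 1 + s / t * (1 + t * P) = 1 + s * P := by field_simp; ring
  simp only [smul_eq_mul, log_one, mul_zero, zero_add, hcomb] at hconcave
  rw [div_mul_eq_mul_div, div_lt_iff₀ ht] at hconcave
  linarith

theorem one_add_mul_pow_lt_one_add_mul_pow {P : ℝ} (hP : 0 < P) {m n : ℕ} (hm : 0 < m)
    (hmn : m < n) : (1 + n * P) ^ m < (1 + m * P) ^ n := by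
  rw [← log_lt_log_iff (by positivity) (by positivity), log_pow, log_pow]
  exact mul_log_one_add_mul_lt_mul_log_one_add_mul hP (by exact_mod_cast hm)
    (by exact_mod_cast hmn)

theorem ell_one_eq (J : ℕ) (P : ℝ) (hJ : (J : ℝ) ≠ 1) :
    ell J P 1 = ((J - 1) * log (1 + J * P) - J * log (1 + (J - 1) * P)) / (2 * (J - 1)) := by
  have hJ' : (J : ℝ) - 1 ≠ 0 := sub_ne_zero.2 hJ
  rw [ell, mul_one, mul_one, mul_comm P]
  field_simp

/-- For every real `P > 0` and every integer `J ≥ 2`, one has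
`(1 + J·P)^(J−1) < (1 + (J−1)·P)^J`; equivalently, `ℓ(1) < 0`. -/
theorem stmt_2 (P : ℝ) (hP : 0 < P) (J : ℕ) (hJ : 2 ≤ J) :
    (1 + (J : ℝ) * P) ^ (J - 1) < (1 + ((J : ℝ) - 1) * P) ^ J ∧ ell J P 1 < 0 := by
  have hJ1 : ((J - 1 : ℕ) : ℝ) = J - 1 := by rw [Nat.cast_sub (by omega), Nat.cast_one]
  have hJ1_pos : (0 : ℝ) < J - 1 := by rw [← hJ1]; exact_mod_cast (by omega : 0 < J - 1)
  constructor
  · have h := one_add_mul_pow_lt_one_add_mul_pow hP (m := J - 1) (n := J) (by omega) (by omega)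
    rwa [hJ1] at h
  · rw [ell_one_eq J P (by linarith)]
    exact div_neg_of_neg_of_pos
      (sub_neg.2 (mul_log_one_add_mul_lt_mul_log_one_add_mul hP hJ1_pos (by linarith)))
      (by positivity)
end

section
/- For every real P > 0 and every integer J ≥ 2, the infimum of −(1/2)·log(1 + J·P·β) over the set {β ∈ [0, J] : ℓ(β) ≤ 0} equals the infimum of −(1/2)·log(1 + J·P·β) over the smaller set {β ∈ [1, J] : ℓ(β) ≤ 0}. -/
lemma ell_one_nonpos (P : ℝ) (hP : 0 < P) (J : ℕ) (hJ : 2 ≤ J) : ell J P 1 ≤ 0 := by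
  set j : ℝ := (J : ℝ) with hj
  have hj2 : (2 : ℝ) ≤ j := by rw [hj]; exact_mod_cast hJ
  have hj0 : 0 < j := by linarith
  have hj1 : 0 < j - 1 := by linarith
  -- concavity of log: (1/j)*log 1 + ((j-1)/j)*log(1+j*P) ≤ log(1+(j-1)*P)
  have hconc := strictConcaveOn_log_Ioi.concaveOn.2 (x := 1) (y := 1 + j * P)
    (by simp : (1:ℝ) ∈ Set.Ioi (0:ℝ))
    (by simp; nlinarith : (1 + j * P) ∈ Set.Ioi (0:ℝ))
    (by positivity : (0:ℝ) ≤ 1 / j)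
    (by positivity : (0:ℝ) ≤ (j - 1) / j)
    (by field_simp; ring)
  simp only [smul_eq_mul, Real.log_one, mul_zero, mul_one, zero_add] at hconc
  have hx : 1 / j + (j - 1) / j * (1 + j * P) = 1 + (j - 1) * P := by
    field_simp; ring
  rw [hx] at hconc
  -- now conclude
  have key : (j - 1) / j * Real.log (1 + j * P * 1) ≤ Real.log (1 + P * 1 * (j - 1)) := by
    have h1 : (1 + j * P * 1) = 1 + j * P := by ring
    have h2 : (1 + P * 1 * (j - 1)) = 1 + (j - 1) * P := by ring
    rw [h1, h2]; exact hconc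
  have hden : 0 < 2 * (j - 1) := by linarith
  unfold ell
  rw [← hj]
  rw [sub_nonpos]
  have h := mul_le_mul_of_nonneg_left key (le_of_lt hj0)
  have hL : j * ((j - 1) / j * Real.log (1 + j * P * 1))
      = (j - 1) * Real.log (1 + j * P * 1) := by field_simp
  rw [hL] at h
  have heq : j / (2 * (j - 1)) * Real.log (1 + P * 1 * (j - 1))
      = (j * Real.log (1 + P * 1 * (j - 1))) / (2 * (j - 1)) := by ring
  rw [heq, le_div_iff₀ hden]
  nlinarith [h]

/-- For every real `P > 0` and every integer `J ≥ 2`, the infimum of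
`−(1/2)·log(1 + J·P·β)` over `{β ∈ [0, J] : ℓ(β) ≤ 0}` equals the infimum over
`{β ∈ [1, J] : ℓ(β) ≤ 0}`. -/
theorem stmt_3 (P : ℝ) (hP : 0 < P) (J : ℕ) (hJ : 2 ≤ J) :
    sInf ((fun β : ℝ => -(1 / 2) * Real.log (1 + (J : ℝ) * P * β)) ''
        {β : ℝ | β ∈ Set.Icc (0 : ℝ) (J : ℝ) ∧ ell J P β ≤ 0})
      = sInf ((fun β : ℝ => -(1 / 2) * Real.log (1 + (J : ℝ) * P * β)) ''
        {β : ℝ | β ∈ Set.Icc (1 : ℝ) (J : ℝ) ∧ ell J P β ≤ 0}) := by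
  set j : ℝ := (J : ℝ) with hjdef
  have hj2 : (2 : ℝ) ≤ j := by rw [hjdef]; exact_mod_cast hJ
  set f : ℝ → ℝ := fun β : ℝ => -(1 / 2) * Real.log (1 + j * P * β) with hf
  set A : Set ℝ := {β : ℝ | β ∈ Set.Icc (0 : ℝ) j ∧ ell J P β ≤ 0} with hA
  set B : Set ℝ := {β : ℝ | β ∈ Set.Icc (1 : ℝ) j ∧ ell J P β ≤ 0} with hB
  have h1B : (1 : ℝ) ∈ B := ⟨⟨le_refl 1, by linarith⟩, ell_one_nonpos P hP J hJ⟩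
  have hBA : B ⊆ A := fun β hβ => ⟨⟨by linarith [hβ.1.1], hβ.1.2⟩, hβ.2⟩
  -- antitonicity of f on [0, j]
  have hmono : ∀ x y : ℝ, 0 ≤ x → x ≤ y → f y ≤ f x := by
    intro x y hx hxy
    have hpos : 0 < 1 + j * P * x := by nlinarith [mul_nonneg (mul_nonneg (by linarith : (0:ℝ) ≤ j) hP.le) hx]
    have : Real.log (1 + j * P * x) ≤ Real.log (1 + j * P * y) := by
      apply Real.log_le_log hpos; nlinarith [mul_nonneg (mul_nonneg (by linarith : (0:ℝ) ≤ j) hP.le) (by linarith : (0:ℝ) ≤ y - x)]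
    simp only [hf]; linarith
  -- bounded below
  have hbddA : BddBelow (f '' A) := by
    refine ⟨f j, ?_⟩
    rintro y ⟨β, ⟨⟨hβ0, hβj⟩, _⟩, rfl⟩
    exact hmono β j hβ0 hβj
  have hbddB : BddBelow (f '' B) := hbddA.mono (Set.image_mono hBA)
  have hneB : (f '' B).Nonempty := ⟨f 1, Set.mem_image_of_mem f h1B⟩
  have hneA : (f '' A).Nonempty := hneB.mono (Set.image_mono hBA)
  apply le_antisymm
  · exact csInf_le_csInf hbddA hneB (Set.image_mono hBA)
  · apply le_csInf hneA
    rintro y ⟨β, ⟨⟨hβ0, hβj⟩, hℓ⟩, rfl⟩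
    by_cases hβ1 : 1 ≤ β
    · exact csInf_le hbddB ⟨β, ⟨⟨hβ1, hβj⟩, hℓ⟩, rfl⟩
    · have h1 : f 1 ≤ f β := hmono β 1 hβ0 (le_of_not_ge hβ1)
      exact le_trans (csInf_le hbddB (Set.mem_image_of_mem f h1B)) h1
end

section
/- For every real P > 0 and every integer J ≥ 3, letting β* denote the unique solution in [1, J] of (1 + J·P·β)^(J−1) = (1 + P·β·(J−β))^J, the following strong-duality identity holds: sup over λ ≥ 0 of ( inf over β ∈ [0, J] of ( −(1/2)·log(1 + J·P·β) + λ·ℓ(β) ) ) = −(1/2)·log(1 + J·P·β*). -/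
set_option maxHeartbeats 1000000


/-- Key strong-duality inequality: there is a multiplier `lam ≥ 0` such that the
Lagrangian `-(1/2)·log(1+nPβ) + lam·ℓ(β)` is minimized on `[0,n]` at `βs`. -/
lemma key_mult (P n βs : ℝ) (hP : 0 < P) (hn : 3 ≤ n) (hβs1 : 1 ≤ βs) (hβsn : βs ≤ n)
    (hlog : (n - 1) * Real.log (1 + n * P * βs) = n * Real.log (1 + P * βs * (n - βs))) :
    ∃ lam : ℝ, 0 ≤ lam ∧ ∀ β ∈ Set.Icc (0 : ℝ) n,
      -(1 / 2) * Real.log (1 + n * P * βs) ≤ -(1 / 2) * Real.log (1 + n * P * β)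
        + lam * ((1 / 2) * Real.log (1 + n * P * β)
            - (n / (2 * (n - 1))) * Real.log (1 + P * β * (n - β))) := by
  have hβs0 : (0:ℝ) < βs := by linarith
  set As : ℝ := 1 + n * P * βs with hAs_def
  set Bs : ℝ := 1 + P * βs * (n - βs) with hBs_def
  have hn0 : (0:ℝ) < n := by linarith
  have hAs : (1:ℝ) < As := by
    have : 0 < n * P * βs := by positivity
    simp only [hAs_def]; linarith
  have hBs : (1:ℝ) ≤ Bs := by
    have : 0 ≤ P * βs * (n - βs) := by
      apply mul_nonneg (by positivity); linarith
    simp only [hBs_def]; linarith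
  set D : ℝ := (n - 1) * Bs - (n - 2 * βs) * As with hD_def
  have hD : 0 < D := by
    have : D = (2 * βs - 1) + P * βs * ((n + 1) * βs - n) := by
      simp only [hD_def, hAs_def, hBs_def]; ring
    rw [this]
    have h1 : (1:ℝ) ≤ (n + 1) * βs - n := by nlinarith
    nlinarith [mul_pos hP hβs0, mul_le_mul_of_nonneg_left h1 (le_of_lt (mul_pos hP hβs0))]
  obtain ⟨lam, hlam0, hlamD⟩ : ∃ lam : ℝ, 0 < lam ∧ lam * D = (n - 1) * Bs := by
    refine ⟨(n - 1) * Bs / D, div_pos (by nlinarith [hBs]) hD, ?_⟩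
    field_simp
  -- the (shifted) Lagrangian, with constant term dropped
  set F : ℝ → ℝ := fun β => (lam - 1) * Real.log (1 + n * P * β)
      - lam * n / (n - 1) * Real.log (1 + P * β * (n - β)) with hF_def
  -- positivity of the log arguments on [0, n]
  have hApos : ∀ β ∈ Set.Icc (0:ℝ) n, 0 < 1 + n * P * β := by
    rintro β ⟨h0, h1⟩
    have : 0 ≤ n * P * β := by positivity
    linarith
  have hBpos : ∀ β ∈ Set.Icc (0:ℝ) n, 0 < 1 + P * β * (n - β) := by
    rintro β ⟨h0, h1⟩
    have : 0 ≤ P * β * (n - β) := by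
      apply mul_nonneg (by positivity); linarith
    linarith
  -- derivative of F
  have hder : ∀ β ∈ Set.Icc (0:ℝ) n, HasDerivAt F
      ((lam - 1) * (n * P / (1 + n * P * β))
        - lam * n / (n - 1) * (P * (n - 2 * β) / (1 + P * β * (n - β)))) β := by
    intro β hβ
    have hA' : HasDerivAt (fun x : ℝ => 1 + n * P * x) (n * P) β := by
      simpa using ((hasDerivAt_id β).const_mul (n * P)).const_add 1
    have hB' : HasDerivAt (fun x : ℝ => 1 + P * x * (n - x)) (P * (n - 2 * β)) β := by
      have h1 : HasDerivAt (fun x : ℝ => P * x) P β := by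
        simpa using (hasDerivAt_id β).const_mul P
      have h2 : HasDerivAt (fun x : ℝ => n - x) (-1) β := by
        exact (hasDerivAt_id β).const_sub n
      have h3 := (h1.mul h2).const_add 1
      rw [show P * (n - 2 * β) = P * (n - β) + P * β * -1 by ring]
      exact h3
    have hlA := hA'.log (hApos β hβ).ne'
    have hlB := hB'.log (hBpos β hβ).ne'
    exact (hlA.const_mul (lam - 1)).sub (hlB.const_mul (lam * n / (n - 1)))
  -- sign of the quadratic factor
  have hquad : ∀ β : ℝ, D * βs * ((lam - 1) * (n - 1) * (1 + P * β * (n - β))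
      - lam * (n - 2 * β) * (1 + n * P * β))
      = (n - 1) * ((β - βs) * (P * ((n + 1) * Bs + D) * β * βs + (Bs + D))) := by
    intro β
    have hE : D * ((lam - 1) * (n - 1) * (1 + P * β * (n - β)) - lam * (n - 2 * β) * (1 + n * P * β))
        = (n - 1) * (Bs * ((n - 1) * (1 + P * β * (n - β)) - (n - 2 * β) * (1 + n * P * β))
            - D * (1 + P * β * (n - β))) := by
      linear_combination ((n - 1) * (1 + P * β * (n - β)) - (n - 2 * β) * (1 + n * P * β)) * hlamD
    have hpoly : βs * (Bs * ((n - 1) * (1 + P * β * (n - β)) - (n - 2 * β) * (1 + n * P * β))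
        - D * (1 + P * β * (n - β)))
        = (β - βs) * (P * ((n + 1) * Bs + D) * β * βs + (Bs + D)) := by
      simp only [hD_def, hBs_def, hAs_def]; ring
    linear_combination βs * hE + (n-1) * hpoly
  -- sign of N(β) := (lam-1)(n-1)B(β) - lam(n-2β)A(β)
  have hNsign : ∀ β : ℝ, 0 ≤ β →
      (β ≤ βs → (lam - 1) * (n - 1) * (1 + P * β * (n - β))
          - lam * (n - 2 * β) * (1 + n * P * β) ≤ 0) ∧
      (βs ≤ β → 0 ≤ (lam - 1) * (n - 1) * (1 + P * β * (n - β))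
          - lam * (n - 2 * β) * (1 + n * P * β)) := by
    intro β hβ0
    have hBsD : 0 < (n + 1) * Bs + D := by nlinarith
    have hfac : 0 < P * ((n + 1) * Bs + D) * β * βs + (Bs + D) := by
      have h1 : 0 ≤ P * ((n + 1) * Bs + D) * β * βs :=
        mul_nonneg (mul_nonneg (mul_nonneg hP.le hBsD.le) hβ0) hβs0.le
      nlinarith
    have hDβs : 0 < D * βs := mul_pos hD hβs0
    constructor
    · intro hc
      have h2 : (β - βs) * (P * ((n + 1) * Bs + D) * β * βs + (Bs + D)) ≤ 0 :=
        mul_nonpos_of_nonpos_of_nonneg (by linarith) hfac.le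
      nlinarith [hquad β]
    · intro hc
      have h2 : 0 ≤ (β - βs) * (P * ((n + 1) * Bs + D) * β * βs + (Bs + D)) :=
        mul_nonneg (by linarith) hfac.le
      nlinarith [hquad β]
  have hn1 : (n:ℝ) - 1 ≠ 0 := by linarith
  -- rewriting the derivative as a quotient
  have hexpr : ∀ β ∈ Set.Icc (0:ℝ) n,
      (lam - 1) * (n * P / (1 + n * P * β))
        - lam * n / (n - 1) * (P * (n - 2 * β) / (1 + P * β * (n - β)))
      = n * P * ((lam - 1) * (n - 1) * (1 + P * β * (n - β))
          - lam * (n - 2 * β) * (1 + n * P * β))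
        / ((n - 1) * (1 + n * P * β) * (1 + P * β * (n - β))) := by
    intro β hβ
    have hA := hApos β hβ
    have hB := hBpos β hβ
    field_simp
  -- F is antitone on [0, βs]
  have hsub1 : Set.Icc (0:ℝ) βs ⊆ Set.Icc 0 n := Set.Icc_subset_Icc le_rfl hβsn
  have hant : AntitoneOn F (Set.Icc (0:ℝ) βs) := by
    apply antitoneOn_of_deriv_nonpos (convex_Icc _ _)
    · intro x hx
      exact (hder x (hsub1 hx)).differentiableAt.continuousAt.continuousWithinAt
    · intro x hx
      rw [interior_Icc] at hx
      exact (hder x (hsub1 (Set.mem_Icc_of_Ioo hx))).differentiableAt.differentiableWithinAt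
    · intro x hx
      rw [interior_Icc] at hx
      have hx' : x ∈ Set.Icc (0:ℝ) n := hsub1 (Set.mem_Icc_of_Ioo hx)
      rw [(hder x hx').deriv, hexpr x hx']
      apply div_nonpos_of_nonpos_of_nonneg
      · exact mul_nonpos_of_nonneg_of_nonpos (by positivity) ((hNsign x hx'.1).1 hx.2.le)
      · have := mul_pos (mul_pos (by linarith : (0:ℝ) < n - 1) (hApos x hx')) (hBpos x hx')
        linarith
  -- F is monotone on [βs, n]
  have hsub2 : Set.Icc βs n ⊆ Set.Icc (0:ℝ) n := Set.Icc_subset_Icc (by linarith) le_rfl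
  have hmono : MonotoneOn F (Set.Icc βs n) := by
    apply monotoneOn_of_deriv_nonneg (convex_Icc _ _)
    · intro x hx
      exact (hder x (hsub2 hx)).differentiableAt.continuousAt.continuousWithinAt
    · intro x hx
      rw [interior_Icc] at hx
      exact (hder x (hsub2 (Set.mem_Icc_of_Ioo hx))).differentiableAt.differentiableWithinAt
    · intro x hx
      rw [interior_Icc] at hx
      have hx' : x ∈ Set.Icc (0:ℝ) n := hsub2 (Set.mem_Icc_of_Ioo hx)
      rw [(hder x hx').deriv, hexpr x hx']
      apply div_nonneg
      · exact mul_nonneg (by positivity) ((hNsign x hx'.1).2 hx.1.le)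
      · have := mul_pos (mul_pos (by linarith : (0:ℝ) < n - 1) (hApos x hx')) (hBpos x hx')
        linarith
  -- value of F at βs
  have hFβs : F βs = -Real.log As := by
    have hlog' : lam * n / (n - 1) * Real.log Bs = lam * Real.log As := by
      field_simp
      linear_combination (-1) * hlog
    simp only [hF_def, ← hAs_def, ← hBs_def]
    rw [hlog']
    ring
  clear_value As Bs D F
  refine ⟨lam, hlam0.le, ?_⟩
  intro β hβ
  have hFβ : -Real.log As ≤ F β := by
    rcases le_total β βs with hc | hc
    · rw [← hFβs]
      exact hant ⟨hβ.1, hc⟩ ⟨hβs0.le, le_rfl⟩ hc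
    · rw [← hFβs]
      exact hmono ⟨le_rfl, hβsn⟩ ⟨hc, hβ.2⟩ hc
  have hrw : -(1 / 2) * Real.log (1 + n * P * β)
      + lam * ((1 / 2) * Real.log (1 + n * P * β)
        - n / (2 * (n - 1)) * Real.log (1 + P * β * (n - β)))
      = (1 / 2) * (F β + Real.log As) - (1 / 2) * Real.log As := by
    simp only [hF_def]
    field_simp
    ring
  rw [hrw]
  linarith

/-- Strong duality: for `P > 0`, integer `J ≥ 3`, and `β*` the unique solution in
`[1, J]` of `(1 + J·P·β)^(J−1) = (1 + P·β·(J−β))^J`,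
`sup_{λ ≥ 0} inf_{β ∈ [0,J]} ( −(1/2)·log(1 + J·P·β) + λ·ℓ(β) ) = −(1/2)·log(1 + J·P·β*)`. -/
theorem stmt_4 (P : ℝ) (hP : 0 < P) (J : ℕ) (hJ : 3 ≤ J) (βs : ℝ)
    (hβs : βs ∈ Set.Icc (1 : ℝ) (J : ℝ))
    (heq : (1 + (J : ℝ) * P * βs) ^ (J - 1) = (1 + P * βs * ((J : ℝ) - βs)) ^ J)
    (huniq : ∀ β : ℝ, β ∈ Set.Icc (1 : ℝ) (J : ℝ) →
      (1 + (J : ℝ) * P * β) ^ (J - 1) = (1 + P * β * ((J : ℝ) - β)) ^ J → β = βs) :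
    sSup ((fun lam : ℝ =>
        sInf ((fun β : ℝ => -(1 / 2) * Real.log (1 + (J : ℝ) * P * β) + lam * ell J P β) ''
          Set.Icc (0 : ℝ) (J : ℝ))) '' Set.Ici (0 : ℝ))
      = -(1 / 2) * Real.log (1 + (J : ℝ) * P * βs) := by
  have hn3 : (3:ℝ) ≤ (J:ℝ) := by exact_mod_cast hJ
  obtain ⟨hβs1, hβsn⟩ := hβs
  have hβs0 : (0:ℝ) < βs := by linarith
  have hn1 : (J:ℝ) - 1 ≠ 0 := by linarith
  -- take logs in `heq`
  have hlog : ((J:ℝ) - 1) * Real.log (1 + (J:ℝ) * P * βs)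
      = (J:ℝ) * Real.log (1 + P * βs * ((J:ℝ) - βs)) := by
    have h := congrArg Real.log heq
    rw [Real.log_pow, Real.log_pow] at h
    have hc : ((J - 1 : ℕ) : ℝ) = (J:ℝ) - 1 := by
      have h1 : (1:ℕ) ≤ J := by omega
      push_cast [h1]
      ring
    rw [hc] at h
    exact h
  obtain ⟨lam, hlam0, hkey⟩ := key_mult P (J:ℝ) βs hP hn3 hβs1 hβsn hlog
  have hellβs : ell J P βs = 0 := by
    unfold ell
    field_simp
    linear_combination hlog
  have hβsmem : βs ∈ Set.Icc (0:ℝ) (J:ℝ) := ⟨hβs0.le, hβsn⟩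
  -- continuity of the inner functions on the compact interval
  have hApos : ∀ β ∈ Set.Icc (0:ℝ) (J:ℝ), (0:ℝ) < 1 + (J:ℝ) * P * β := by
    rintro β ⟨h0, h1⟩
    have : 0 ≤ (J:ℝ) * P * β := by positivity
    linarith
  have hBpos : ∀ β ∈ Set.Icc (0:ℝ) (J:ℝ), (0:ℝ) < 1 + P * β * ((J:ℝ) - β) := by
    rintro β ⟨h0, h1⟩
    have : 0 ≤ P * β * ((J:ℝ) - β) := by
      apply mul_nonneg (by positivity); linarith
    linarith
  have hlogA : ContinuousOn (fun β : ℝ => Real.log (1 + (J:ℝ) * P * β)) (Set.Icc 0 (J:ℝ)) := by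
    apply ContinuousOn.log
    · fun_prop
    · exact fun x hx => (hApos x hx).ne'
  have hlogB : ContinuousOn (fun β : ℝ => Real.log (1 + P * β * ((J:ℝ) - β)))
      (Set.Icc 0 (J:ℝ)) := by
    apply ContinuousOn.log
    · fun_prop
    · exact fun x hx => (hBpos x hx).ne'
  have hcont : ∀ μ : ℝ, ContinuousOn
      (fun β : ℝ => -(1 / 2) * Real.log (1 + (J:ℝ) * P * β) + μ * ell J P β)
      (Set.Icc 0 (J:ℝ)) := by
    intro μ
    simp only [ell]
    exact (continuousOn_const.mul hlogA).add (continuousOn_const.mul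
      ((continuousOn_const.mul hlogA).sub (continuousOn_const.mul hlogB)))
  have hbdd : ∀ μ : ℝ, BddBelow
      ((fun β : ℝ => -(1 / 2) * Real.log (1 + (J:ℝ) * P * β) + μ * ell J P β) ''
        Set.Icc (0:ℝ) (J:ℝ)) := fun μ =>
    (isCompact_Icc.image_of_continuousOn (hcont μ)).bddBelow
  -- every dual value is ≤ the claimed value
  have hub : ∀ y ∈ ((fun lam : ℝ =>
      sInf ((fun β : ℝ => -(1 / 2) * Real.log (1 + (J : ℝ) * P * β) + lam * ell J P β) ''
        Set.Icc (0 : ℝ) (J : ℝ))) '' Set.Ici (0 : ℝ)),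
      y ≤ -(1 / 2) * Real.log (1 + (J:ℝ) * P * βs) := by
    rintro y ⟨μ, hμ, rfl⟩
    have h1 : sInf _ ≤ -(1 / 2) * Real.log (1 + (J:ℝ) * P * βs) + μ * ell J P βs :=
      csInf_le (hbdd μ) ⟨βs, hβsmem, rfl⟩
    rw [hellβs] at h1
    linarith
  -- the claimed value is attained at `lam`
  have hmem : -(1 / 2) * Real.log (1 + (J:ℝ) * P * βs) ∈ ((fun lam : ℝ =>
      sInf ((fun β : ℝ => -(1 / 2) * Real.log (1 + (J : ℝ) * P * β) + lam * ell J P β) ''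
        Set.Icc (0 : ℝ) (J : ℝ))) '' Set.Ici (0 : ℝ)) := by
    refine ⟨lam, hlam0, ?_⟩
    apply le_antisymm
    · have h1 : sInf _ ≤ -(1 / 2) * Real.log (1 + (J:ℝ) * P * βs) + lam * ell J P βs :=
        csInf_le (hbdd lam) ⟨βs, hβsmem, rfl⟩
      rw [hellβs] at h1
      linarith
    · apply le_csInf (Set.Nonempty.image _ ⟨βs, hβsmem⟩)
      rintro y ⟨β, hβmem, rfl⟩
      have := hkey β hβmem
      simpa [ell] using this
  exact le_antisymm (csSup_le ⟨_, hmem⟩ hub) (le_csSup ⟨_, hub⟩ hmem)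
end

section
/- For every real P > 0 and every integer J ≥ 2, the unique solution β ∈ [1, J] of (1 + J·P·β)^(J−1) = (1 + P·β·(J−β))^J satisfies the strict inequality (J − 2β)·(1 + J·P·β) < (J−1)·(1 + P·β·(J−β)); consequently λ* = (1 − (J − 2β)(1 + J·P·β) / ((J−1)(1 + P·β·(J−β))))^(−1) is well-defined and strictly positive. -/
lemma sub_mul_one_add_sub_mul_one_add (P J β : ℝ) :
    (J - 1) * (1 + P * β * (J - β)) - (J - 2 * β) * (1 + J * P * β)
      = (2 * β - 1) + P * β * (J * (β - 1) + β) := by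
  ring

lemma sub_two_mul_mul_lt {P J β : ℝ} (hP : 0 ≤ P) (hJ : 0 ≤ J) (hβ : 1 ≤ β) :
    (J - 2 * β) * (1 + J * P * β) < (J - 1) * (1 + P * β * (J - β)) := by
  have hterm : 0 ≤ P * β * (J * (β - 1) + β) := by
    have : 0 ≤ J * (β - 1) := mul_nonneg hJ (by linarith)
    positivity
  have := sub_mul_one_add_sub_mul_one_add P J β
  linarith

lemma sub_one_mul_one_add_pos {P J β : ℝ} (hP : 0 ≤ P) (hJ : 1 < J) (hβ₀ : 0 ≤ β)
    (hβJ : β ≤ J) : 0 < (J - 1) * (1 + P * β * (J - β)) := by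
  have : 0 ≤ P * β * (J - β) := mul_nonneg (mul_nonneg hP hβ₀) (by linarith)
  exact mul_pos (by linarith) (by linarith)

lemma inv_one_sub_div_pos {a b : ℝ} (hb : 0 < b) (hab : a < b) : 0 < (1 - a / b)⁻¹ :=
  inv_pos.mpr (sub_pos.mpr ((div_lt_one hb).mpr hab))

theorem stmt_5_general (P : ℝ) (hP : 0 < P) (J : ℕ) (hJ : 2 ≤ J) (β : ℝ)
    (hβ : β ∈ Set.Icc (1 : ℝ) (J : ℝ)) :
    ((J : ℝ) - 2 * β) * (1 + (J : ℝ) * P * β)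
        < ((J : ℝ) - 1) * (1 + P * β * ((J : ℝ) - β)) ∧
      0 < (1 - ((J : ℝ) - 2 * β) * (1 + (J : ℝ) * P * β) /
        (((J : ℝ) - 1) * (1 + P * β * ((J : ℝ) - β))))⁻¹ := by
  obtain ⟨hβ₁, hβJ⟩ := hβ
  have hJ₁ : (1 : ℝ) < J := by exact_mod_cast hJ
  have hlt := sub_two_mul_mul_lt hP.le (J.cast_nonneg : (0 : ℝ) ≤ J) hβ₁
  exact ⟨hlt, inv_one_sub_div_pos (sub_one_mul_one_add_pos hP.le hJ₁ (by linarith) hβJ) hlt⟩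

/-- For `P > 0` and integer `J ≥ 2`, the unique solution `β ∈ [1, J]` of
`(1 + J·P·β)^(J−1) = (1 + P·β·(J−β))^J` satisfies
`(J − 2β)·(1 + J·P·β) < (J−1)·(1 + P·β·(J−β))`; consequently
`λ* = (1 − (J − 2β)(1 + J·P·β)/((J−1)(1 + P·β·(J−β))))⁻¹` is strictly positive. -/
theorem stmt_5 (P : ℝ) (hP : 0 < P) (J : ℕ) (hJ : 2 ≤ J) (β : ℝ)
    (hβ : β ∈ Set.Icc (1 : ℝ) (J : ℝ))
    (heq : (1 + (J : ℝ) * P * β) ^ (J - 1) = (1 + P * β * ((J : ℝ) - β)) ^ J) :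
    ((J : ℝ) - 2 * β) * (1 + (J : ℝ) * P * β)
        < ((J : ℝ) - 1) * (1 + P * β * ((J : ℝ) - β)) ∧
      0 < (1 - ((J : ℝ) - 2 * β) * (1 + (J : ℝ) * P * β) /
        (((J : ℝ) - 1) * (1 + P * β * ((J : ℝ) - β))))⁻¹ :=
  stmt_5_general P hP J hJ β hβ
end

section
/- Let J ≥ 2 be an integer, P > 0 a real number, and M a J×J real symmetric positive semidefinite matrix with M_{jj} = P for all j. Set S = Σ_{j,k=1}^J M_{jk} and r_j = Σ_{k=1}^J M_{jk} (the j-th row sum). Then Π_{j=1}^J (1 + S − r_j²/P) ≤ (1 + S − S²/(J²·P))^J. -/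
open Finset

/-- Let `J ≥ 2`, `P > 0`, and `M` a `J×J` real symmetric positive semidefinite matrix
with all diagonal entries equal to `P`. With `S = Σ_{j,k} M_{jk}` and
`r_j = Σ_k M_{jk}`, one has `Π_j (1 + S − r_j²/P) ≤ (1 + S − S²/(J²·P))^J`. -/
theorem stmt_6 (J : ℕ) (hJ : 2 ≤ J) (P : ℝ) (hP : 0 < P)
    (M : Matrix (Fin J) (Fin J) ℝ) (hM : M.IsSymm) (hpsd : M.PosSemidef)
    (hdiag : ∀ j : Fin J, M j j = P) :
    (∏ j : Fin J, (1 + (∑ l : Fin J, ∑ k : Fin J, M l k)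
        - (∑ k : Fin J, M j k) ^ 2 / P))
      ≤ (1 + (∑ l : Fin J, ∑ k : Fin J, M l k)
        - (∑ l : Fin J, ∑ k : Fin J, M l k) ^ 2 / ((J : ℝ) ^ 2 * P)) ^ J := by
  have hJ0 : (0:ℝ) < (J:ℝ) := by
    have : 0 < J := by omega
    exact_mod_cast this
  set S : ℝ := ∑ l : Fin J, ∑ k : Fin J, M l k with hSdef
  set r : Fin J → ℝ := fun j => ∑ k : Fin J, M j k with hrdef
  have hsym : ∀ i j, M i j = M j i := fun i j => hM.apply j i
  -- quadratic form nonnegativity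
  have hq : ∀ x : Fin J → ℝ, 0 ≤ ∑ k, x k * ∑ l, M k l * x l := by
    intro x
    have := hpsd.dotProduct_mulVec_nonneg x
    simpa [dotProduct, Matrix.mulVec] using this
  have hSsum : S = ∑ j, r j := rfl
  have hS0 : 0 ≤ S := by
    have h1 := hq (fun _ => 1)
    simpa [hSdef] using h1
  -- Cauchy-Schwarz: r j ^ 2 ≤ S * P
  have key : ∀ j, (r j) ^ 2 ≤ S * P := by
    intro j
    have hcol : (∑ k, M k j) = r j := Finset.sum_congr rfl fun k _ => hsym k j
    have h : ∀ t : ℝ, 0 ≤ S * (t * t) + (2 * r j) * t + P := by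
      intro t
      have h0 := hq (fun k => t + if k = j then 1 else 0)
      have hin : ∀ k, (∑ l, M k l * (t + if l = j then 1 else 0)) = t * r k + M k j := by
        intro k
        simp only [mul_add, Finset.sum_add_distrib, mul_ite, mul_one, mul_zero,
          Finset.sum_ite_eq', Finset.mem_univ, if_true]
        rw [hrdef]
        simp [Finset.sum_mul, Finset.mul_sum, mul_comm]
      rw [Finset.sum_congr rfl (fun k _ => by rw [hin k])] at h0
      have hterm : ∀ k : Fin J, (t + if k = j then 1 else 0) * (t * r k + M k j)
          = (t * t) * r k + t * M k j + (if k = j then t * r k + M k j else 0) := by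
        intro k; by_cases h : k = j <;> simp [h] <;> ring
      rw [Finset.sum_congr rfl (fun k _ => hterm k)] at h0
      have hexp : (∑ k, ((t * t) * r k + t * M k j + (if k = j then t * r k + M k j else 0)))
          = S * (t * t) + (2 * r j) * t + P := by
        rw [Finset.sum_add_distrib, Finset.sum_add_distrib, ← Finset.mul_sum, ← Finset.mul_sum,
          ← hSsum, hcol, Finset.sum_ite_eq' Finset.univ j]
        simp [hdiag j]
        ring
      rw [hexp] at h0
      exact h0
    have hd := discrim_le_zero h
    rw [discrim] at hd
    nlinarith [hd]
  set a : Fin J → ℝ := fun j => 1 + S - (r j) ^ 2 / P with hadef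
  have ha1 : ∀ j, (1:ℝ) ≤ a j := by
    intro j
    have : (r j) ^ 2 / P ≤ S := by
      rw [div_le_iff₀ hP]; linarith [key j]
    simp only [hadef]; linarith
  have ha0 : ∀ j, (0:ℝ) ≤ a j := fun j => le_trans zero_le_one (ha1 j)
  -- Chebyshev: S^2 ≤ J * ∑ r j ^2
  have cheb : S ^ 2 ≤ (J:ℝ) * ∑ j, (r j) ^ 2 := by
    have := sq_sum_le_card_mul_sum_sq (s := (Finset.univ : Finset (Fin J))) (f := r)
    simpa [hSsum, Finset.card_univ] using this
  set B : ℝ := 1 + S - S ^ 2 / ((J:ℝ) ^ 2 * P) with hBdef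
  -- average bound
  have havg : (∑ j, ((J:ℝ)⁻¹) * a j) ≤ B := by
    have h2 : (∑ j, a j) = (J:ℝ) * (1 + S) - (∑ j, (r j) ^ 2) / P := by
      simp only [hadef]
      rw [Finset.sum_sub_distrib, Finset.sum_const, Finset.card_univ, Fintype.card_fin,
        ← Finset.sum_div]
      push_cast; ring
    rw [← Finset.mul_sum, h2, hBdef]
    have h1 : S ^ 2 / ((J:ℝ) ^ 2 * P) ≤ (∑ j, (r j) ^ 2) / ((J:ℝ) * P) := by
      rw [div_le_div_iff₀ (by positivity) (by positivity)]
      nlinarith [mul_le_mul_of_nonneg_right cheb (mul_nonneg hJ0.le hP.le)]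
    have e3 : ((J:ℝ)⁻¹) * ((J:ℝ) * (1 + S) - (∑ j, (r j) ^ 2) / P)
        = 1 + S - (∑ j, (r j) ^ 2) / ((J:ℝ) * P) := by
      field_simp
    rw [e3]
    linarith
  -- AM-GM
  have amgm := Real.geom_mean_le_arith_mean_weighted Finset.univ (fun _ => (J:ℝ)⁻¹) a
    (fun i _ => by positivity)
    (by simp [Finset.card_univ]; field_simp)
    (fun i _ => ha0 i)
  rw [Real.finset_prod_rpow Finset.univ a (fun i _ => ha0 i) ((J:ℝ)⁻¹)] at amgm
  have hprod0 : 0 ≤ ∏ j, a j := Finset.prod_nonneg fun j _ => ha0 j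
  have hle : ((∏ j, a j) ^ ((J:ℝ)⁻¹)) ^ J ≤ B ^ J :=
    pow_le_pow_left₀ (Real.rpow_nonneg hprod0 _) (le_trans amgm havg) J
  rwa [Real.rpow_inv_natCast_pow hprod0 (by omega)] at hle
end
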